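/- Any winning protocol using c room configurations (under the rule that prisoners may leave a room's configuration unchanged) can be converted into a winning protocol using 2c configurations under the stricter rule that every visit must change the room's configuration: replace each configuration by a pair of configurations treated as equivalent, toggling within the pair when no change is desired. -/
import Mathlib


/-- A prisoner's observation history: the list of (configuration seen on entry,
configuration left on exit) for each of his visits so far. -/
abbrev Hist (C : Type) := List (C × C)

/-- A deterministic strategy: for each prisoner, a function from his history
and the configuration of the room he enters to the configuration he leaves the
room in, together with whether he declares. -/
abbrev Strategy (n : ℕ) (C : Type) := Fin n → Hist C → C → C × Bool

/-- A schedule: who visits which room at each step. -/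
abbrev Schedule (n r : ℕ) := ℕ → Fin n × Fin r

/-- Global state of an execution. -/
structure PState (n r : ℕ) (C : Type) where
  rooms : Fin r → C
  hist : Fin n → Hist C
  declared : Bool

/-- One visit of prisoner `v.1` to room `v.2`. -/
def pstep {n r : ℕ} {C : Type} (σ : Strategy n C) (v : Fin n × Fin r)
    (s : PState n r C) : PState n r C :=
  let cur := s.rooms v.2
  let a := σ v.1 (s.hist v.1) cur
  { rooms := Function.update s.rooms v.2 a.1
    hist := Function.update s.hist v.1 (s.hist v.1 ++ [(cur, a.1)])
    declared := s.declared || a.2 }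

/-- The state after `t` visits, starting from initial room configurations `init`. -/
def prun {n r : ℕ} {C : Type} (σ : Strategy n C) (sch : Schedule n r)
    (init : Fin r → C) : ℕ → PState n r C
  | 0 => ⟨init, fun _ => [], false⟩
  | t + 1 => pstep σ (sch t) (prun σ sch init t)

/-- A schedule is valid if every prisoner visits every room infinitely often. -/
def ValidSchedule {n r : ℕ} (sch : Schedule n r) : Prop :=
  ∀ (p : Fin n) (rm : Fin r), {t | sch t = (p, rm)}.Infinite

/-- Prisoner `p` has visited room `rm` within the first `t` visits. -/
def VisitedBy {n r : ℕ} (sch : Schedule n r) (t : ℕ) (p : Fin n) (rm : Fin r) : Prop :=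
  ∃ t' < t, sch t' = (p, rm)

/-- A strategy is winning for initial configurations `init` if under every
valid schedule some prisoner eventually declares, and every declaration occurs
only after each prisoner has visited every room at least once. -/
def Winning {n r : ℕ} {C : Type} (σ : Strategy n C) (init : Fin r → C) : Prop :=
  ∀ sch : Schedule n r, ValidSchedule sch →
    (∃ t, (prun σ sch init t).declared = true) ∧
    (∀ t, (prun σ sch init t).declared = true → ∀ p rm, VisitedBy sch t p rm)


open Classical in
/-- Projection of a `C × Bool` history to a `C` history. -/
def projHist {C : Type} (h : Hist (C × Bool)) : Hist C :=
  h.map (fun q => (q.1.1, q.2.1))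

open Classical in
noncomputable def liftStrat {n : ℕ} {C : Type} (σ : Strategy n C) :
    Strategy n (C × Bool) :=
  fun p h cur =>
    let a := σ p (projHist h) cur.1
    (if a.1 = cur.1 then (cur.1, !cur.2) else (a.1, cur.2), a.2)

lemma liftStrat_ne {n : ℕ} {C : Type} (σ : Strategy n C)
    (p : Fin n) (h : Hist (C × Bool)) (cur : C × Bool) :
    (liftStrat σ p h cur).1 ≠ cur := by
  classical
  unfold liftStrat
  simp only
  split_ifs with hc
  · intro hEq
    have : (!cur.2) = cur.2 := congrArg Prod.snd hEq
    simp at this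
  · intro hEq
    rw [Prod.ext_iff] at hEq
    exact hc hEq.1

lemma liftStrat_fst {n : ℕ} {C : Type} (σ : Strategy n C)
    (p : Fin n) (h : Hist (C × Bool)) (cur : C × Bool) :
    (liftStrat σ p h cur).1.1 = (σ p (projHist h) cur.1).1 := by
  classical
  unfold liftStrat
  simp only
  split_ifs with hc
  · exact hc.symm
  · rfl

lemma liftStrat_snd {n : ℕ} {C : Type} (σ : Strategy n C)
    (p : Fin n) (h : Hist (C × Bool)) (cur : C × Bool) :
    (liftStrat σ p h cur).2 = (σ p (projHist h) cur.1).2 := rfl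

lemma prun_sim {n r : ℕ} {C : Type} (σ : Strategy n C) (sch : Schedule n r)
    (c0 : C) (t : ℕ) :
    (∀ rm, ((prun (liftStrat σ) sch (fun _ => (c0, false)) t).rooms rm).1
        = (prun σ sch (fun _ => c0) t).rooms rm) ∧
    (∀ p, projHist ((prun (liftStrat σ) sch (fun _ => (c0, false)) t).hist p)
        = (prun σ sch (fun _ => c0) t).hist p) ∧
    (prun (liftStrat σ) sch (fun _ => (c0, false)) t).declared
        = (prun σ sch (fun _ => c0) t).declared := by
  induction t with
  | zero => exact ⟨fun _ => rfl, fun _ => rfl, rfl⟩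
  | succ t ih =>
    obtain ⟨hr, hh, hd⟩ := ih
    set s' := prun (liftStrat σ) sch (fun _ => (c0, false)) t with hs'
    set s := prun σ sch (fun _ => c0) t with hs
    set v := sch t with hv
    have hcur : (s'.rooms v.2).1 = s.rooms v.2 := hr v.2
    have ha1 : ((liftStrat σ) v.1 (s'.hist v.1) (s'.rooms v.2)).1.1
        = (σ v.1 (s.hist v.1) (s.rooms v.2)).1 := by
      rw [liftStrat_fst, hh v.1, hcur]
    have ha2 : ((liftStrat σ) v.1 (s'.hist v.1) (s'.rooms v.2)).2
        = (σ v.1 (s.hist v.1) (s.rooms v.2)).2 := by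
      rw [liftStrat_snd, hh v.1, hcur]
    refine ⟨fun rm => ?_, fun p => ?_, ?_⟩
    · show ((pstep (liftStrat σ) v s').rooms rm).1 = (pstep σ v s).rooms rm
      unfold pstep
      simp only [Function.update]
      split_ifs with h
      · subst h; simp [ha1]
      · exact hr rm
    · show projHist ((pstep (liftStrat σ) v s').hist p) = (pstep σ v s).hist p
      unfold pstep
      simp only [Function.update]
      split_ifs with h
      · subst h
        simp only [projHist, List.map_append, List.map_cons, List.map_nil]
        rw [← projHist, hh v.1, hcur, ha1]
      · exact hh p
    · show (pstep (liftStrat σ) v s').declared = (pstep σ v s).declared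
      unfold pstep
      simp only [hd, ha2]

/-- any winning protocol using configuration set `C` (where a
prisoner may leave a room unchanged) yields a winning protocol using the
configuration set `C × Bool` under the stricter rule that every visit must
change the visited room's configuration. -/
theorem forced_flipping_conversion (n r : ℕ) (hn : 0 < n) (hr : 0 < r)
    (C : Type) (c0 : C)
    (hex : ∃ σ : Strategy n C, Winning σ (fun _ : Fin r => c0)) :
    ∃ σ' : Strategy n (C × Bool),
      (∀ (p : Fin n) (h : Hist (C × Bool)) (cur : C × Bool), (σ' p h cur).1 ≠ cur) ∧
      Winning σ' (fun _ : Fin r => (c0, false)) := by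
  obtain ⟨σ, hw⟩ := hex
  refine ⟨liftStrat σ, liftStrat_ne σ, fun sch hsch => ?_⟩
  obtain ⟨⟨t, ht⟩, hdecl⟩ := hw sch hsch
  constructor
  · exact ⟨t, by rw [(prun_sim σ sch c0 t).2.2]; exact ht⟩
  · intro t h p rm
    exact hdecl t (by rw [← (prun_sim σ sch c0 t).2.2]; exact h) p rm
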